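/- Let N ≥ 1 and let H_i : ℝ^d × ℝ → ℝ (i = 1,…,N) be C² with everywhere positive definite Hessian and superlinear; let π_i^0(p') be the unique minimizer of p ↦ H_i(p',p), A_i(p') = H_i(p', π_i^0(p')), A_0 = max_i A_i, and for λ ≥ A_i(p') let π_i^+(p',λ) be the unique p ≥ π_i^0(p') with H_i(p',p) = λ. Let F : ℝ^d × ℝ^N → ℝ be convex and nonincreasing in each of its last N variables. Then the function G(p',λ) := F(p', (π_1^+(p',λ),…,π_N^+(p',λ))) is convex on the convex set epi A_0 = {(p',λ) : λ ≥ A_0(p')}, and for each fixed p' the map λ ↦ G(p',λ) is nonincreasing on [A_0(p'), +∞). -/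

import Mathlib

/-!
Each `H i` is convex, so the partial minimum `A_i p' = H i (p', π0 i p')` is convex and so is
their maximum `A0`. On a fibre, `p ↦ H i (p', p)` is convex with a unique minimizer, hence strictly
increasing to the right of it, so `πp i p' λ` is the largest `p` with `H i (p', p) ≤ λ`. This gives
monotonicity in `λ`, and, by joint convexity of `H i`, concavity of `(p', λ) ↦ πp i p' λ`: a convex
combination of roots lies in the sublevel set of the combined level. Finally a convex function that
is nonincreasing in its last variables stays convex when composed with concave functions there.
-/

open Set Function

section LineDerivative

variable {E F : Type*} [NormedAddCommGroup E] [NormedSpace ℝ E]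
  [NormedAddCommGroup F] [NormedSpace ℝ F]

theorem iteratedDeriv_comp_line {n : WithTop ℕ∞} {f : E → F} (hf : ContDiff ℝ n f)
    (x v : E) (t : ℝ) {i : ℕ} (hi : i ≤ n) :
    iteratedDeriv i (fun s : ℝ => f (x + s • v)) t =
      iteratedFDeriv ℝ i f (x + t • v) fun _ => v := by
  have hline : (fun s : ℝ => f (x + s • v)) =
      (fun z => f (x + z)) ∘ ContinuousLinearMap.smulRight (1 : ℝ →L[ℝ] ℝ) v := by
    ext s; simp
  rw [iteratedDeriv_eq_iteratedFDeriv, hline,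
    ContinuousLinearMap.iteratedFDeriv_comp_right (f := fun z => f (x + z)) _
      (hf.comp (contDiff_const.add contDiff_id)) t hi]
  simp [iteratedFDeriv_comp_add_left]

theorem strictConvexOn_univ_of_iteratedFDeriv_two_pos {f : E → ℝ} (hf : ContDiff ℝ 2 f)
    (hpos : ∀ x v, v ≠ 0 → 0 < iteratedFDeriv ℝ 2 f x ![v, v]) :
    StrictConvexOn ℝ univ f := by
  refine ⟨convex_univ, fun x _ y _ hxy a b ha hb hab => ?_⟩
  set g : ℝ → ℝ := fun s => f (x + s • (y - x))
  have hg : StrictConvexOn ℝ univ g := by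
    refine strictConvexOn_univ_of_deriv2_pos
      (hf.continuous.comp (continuous_const.add (continuous_id.smul continuous_const))) fun t => ?_
    rw [← iteratedDeriv_eq_iterate, iteratedDeriv_comp_line hf x (y - x) t le_rfl]
    convert hpos (x + t • (y - x)) (y - x) (sub_ne_zero.2 hxy.symm) using 2
    ext i; fin_cases i <;> rfl
  have hcomb : a • x + b • y = x + b • (y - x) := by
    rw [eq_sub_of_add_eq hab]; module
  have h01 := hg.2 (mem_univ 0) (mem_univ 1) zero_ne_one ha hb hab
  simp only [g, smul_eq_mul, mul_zero, mul_one, zero_add, zero_smul, add_zero, one_smul,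
    add_sub_cancel] at h01
  rwa [hcomb]

end LineDerivative

section PartialMinimization

variable {𝕜 E F β : Type*} [Semiring 𝕜] [PartialOrder 𝕜] [AddCommMonoid E] [Module 𝕜 E]
  [AddCommMonoid F] [Module 𝕜 F]

theorem ConvexOn.comp_prodMk_argmin [AddCommMonoid β] [PartialOrder β] [Module 𝕜 β]
    {f : E × F → β} (hf : ConvexOn 𝕜 univ f) {m : E → F} (hm : ∀ x y, f (x, m x) ≤ f (x, y)) :
    ConvexOn 𝕜 univ fun x => f (x, m x) := by
  refine ⟨convex_univ, fun x _ y _ a b ha hb hab => ?_⟩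
  calc f (a • x + b • y, m (a • x + b • y))
      ≤ f (a • (x, m x) + b • (y, m y)) := hm _ _
    _ ≤ a • f (x, m x) + b • f (y, m y) := hf.2 trivial trivial ha hb hab

theorem ConvexOn.comp_prodMk_left [AddCommMonoid β] [PartialOrder β] [Module 𝕜 β]
    {h : E × F → β} (hh : ConvexOn 𝕜 univ h) (x : E) :
    ConvexOn 𝕜 univ fun y => h (x, y) := by
  refine ⟨convex_univ, fun y _ z _ a b ha hb hab => ?_⟩
  have := hh.2 (mem_univ (x, y)) (mem_univ (x, z)) ha hb hab
  rwa [Prod.smul_mk, Prod.smul_mk, Prod.mk_add_mk, Convex.combo_self hab] at this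

theorem ConvexOn.of_isGreatest_range [AddCommMonoid β] [LinearOrder β] [IsOrderedAddMonoid β]
    [Module 𝕜 β] [PosSMulMono 𝕜 β] {ι : Type*} {f : ι → E → β} (hf : ∀ i, ConvexOn 𝕜 univ (f i))
    {g : E → β} (hg : ∀ x, IsGreatest (range fun i => f i x) (g x)) : ConvexOn 𝕜 univ g := by
  refine ⟨convex_univ, fun x _ y _ a b ha hb hab => ?_⟩
  obtain ⟨i, hi⟩ := (hg (a • x + b • y)).1
  calc g (a • x + b • y) = f i (a • x + b • y) := hi.symm
    _ ≤ a • f i x + b • f i y := (hf i).2 trivial trivial ha hb hab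
    _ ≤ a • g x + b • g y := by
      gcongr
      exacts [(hg x).2 ⟨i, rfl⟩, (hg y).2 ⟨i, rfl⟩]

end PartialMinimization

section UpperRoot

variable {𝕜 E : Type*} [Field 𝕜] [LinearOrder 𝕜] [IsStrictOrderedRing 𝕜]

theorem ConvexOn.strictMonoOn_Ici_of_unique_min {g : 𝕜 → 𝕜} (hg : ConvexOn 𝕜 univ g) {m : 𝕜}
    (hmin : ∀ q, g m ≤ g q) (huniq : ∀ p, (∀ q, g p ≤ g q) → p = m) :
    StrictMonoOn g (Ici m) := by
  have hlt : ∀ p, m < p → g m < g p := fun p hmp =>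
    (hmin p).lt_of_ne fun hp => hmp.ne' (huniq p fun q => hp ▸ hmin q)
  intro u (hu : m ≤ u) v _ huv
  rcases hu.eq_or_lt with rfl | hmu
  · exact hlt v huv
  · exact hg.strictMonoOn (mem_univ m) hmu (hlt u hmu) ⟨trivial, le_rfl⟩ ⟨trivial, huv.le⟩ huv

theorem ConvexOn.le_of_apply_le_of_unique_min {g : 𝕜 → 𝕜} (hg : ConvexOn 𝕜 univ g) {m : 𝕜}
    (hmin : ∀ q, g m ≤ g q) (huniq : ∀ p, (∀ q, g p ≤ g q) → p = m) {p y : 𝕜} (hy : m ≤ y)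
    (hp : g p ≤ g y) : p ≤ y := by
  by_contra! hyp
  exact (hg.strictMonoOn_Ici_of_unique_min hmin huniq hy (hy.trans hyp.le) hyp).not_ge hp

variable [AddCommGroup E] [Module 𝕜 E] {h : E × 𝕜 → 𝕜} {m : E → 𝕜} {r : E → 𝕜 → 𝕜}

theorem ConvexOn.concaveOn_upperRoot (hh : ConvexOn 𝕜 univ h)
    (hmin : ∀ x y, h (x, m x) ≤ h (x, y))
    (huniq : ∀ x p, (∀ y, h (x, p) ≤ h (x, y)) → p = m x)
    (hr : ∀ x l, h (x, m x) ≤ l → m x ≤ r x l ∧ h (x, r x l) = l) :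
    ConcaveOn 𝕜 {q : E × 𝕜 | h (q.1, m q.1) ≤ q.2} fun q => r q.1 q.2 := by
  have hconv : Convex 𝕜 {q : E × 𝕜 | h (q.1, m q.1) ≤ q.2} := by
    simpa using (hh.comp_prodMk_argmin hmin).convex_epigraph
  refine ⟨hconv, fun q₁ hq₁ q₂ hq₂ a b ha hb hab => ?_⟩
  obtain ⟨-, hr₁⟩ := hr q₁.1 q₁.2 hq₁
  obtain ⟨-, hr₂⟩ := hr q₂.1 q₂.2 hq₂
  set q : E × 𝕜 := a • q₁ + b • q₂
  obtain ⟨hm, hrq⟩ := hr q.1 q.2 (hconv hq₁ hq₂ ha hb hab)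
  refine (hh.comp_prodMk_left q.1).le_of_apply_le_of_unique_min (hmin q.1) (huniq q.1) hm ?_
  calc h (q.1, a • r q₁.1 q₁.2 + b • r q₂.1 q₂.2)
      = h (a • (q₁.1, r q₁.1 q₁.2) + b • (q₂.1, r q₂.1 q₂.2)) := rfl
    _ ≤ a • h (q₁.1, r q₁.1 q₁.2) + b • h (q₂.1, r q₂.1 q₂.2) := hh.2 trivial trivial ha hb hab
    _ = h (q.1, r q.1 q.2) := by rw [hr₁, hr₂, hrq]; rfl

theorem ConvexOn.monotoneOn_upperRoot (hh : ConvexOn 𝕜 univ h)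
    (hmin : ∀ x y, h (x, m x) ≤ h (x, y))
    (huniq : ∀ x p, (∀ y, h (x, p) ≤ h (x, y)) → p = m x)
    (hr : ∀ x l, h (x, m x) ≤ l → m x ≤ r x l ∧ h (x, r x l) = l) (x : E) :
    MonotoneOn (r x) (Ici (h (x, m x))) := by
  intro l (hl : _ ≤ l) l' _ hll'
  obtain ⟨-, hrl⟩ := hr x l hl
  obtain ⟨hm', hrl'⟩ := hr x l' (hl.trans hll')
  exact (hh.comp_prodMk_left x).le_of_apply_le_of_unique_min (hmin x) (huniq x) hm'
    (by rw [hrl, hrl']; exact hll')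

end UpperRoot

theorem antitone_of_antitone_update {ι α β : Type*} [Fintype ι] [DecidableEq ι] [Preorder α]
    [Preorder β] {f : (ι → α) → β} (hf : ∀ q i, Antitone fun a => f (update q i a)) :
    Antitone f := by
  suffices key : ∀ s : Finset ι, ∀ u q : ι → α, u ≤ q → (∀ i ∉ s, u i = q i) → f q ≤ f u from
    fun u q huq => key Finset.univ u q huq fun i hi => absurd (Finset.mem_univ i) hi
  intro s
  induction s using Finset.induction_on with
  | empty => exact fun u q _ hs => (funext fun i => hs i (Finset.notMem_empty i)) ▸ le_rfl
  | insert j s _ ih =>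
    intro u q huq hs
    have hle : u ≤ update q j (u j) := fun i => by
      rcases eq_or_ne i j with rfl | hij
      · simp
      · simpa [hij] using huq i
    have heq : ∀ i ∉ s, u i = update q j (u j) i := fun i hi => by
      rcases eq_or_ne i j with rfl | hij
      · simp
      · simpa [hij] using hs i (by simp [hij, hi])
    calc f q = f (update q j (q j)) := by rw [update_eq_self]
      _ ≤ f (update q j (u j)) := hf q j (huq j)
      _ ≤ f u := ih u _ hle heq

theorem ConvexOn.comp_prodMk_concaveOn {𝕜 E X ι β γ : Type*} [Semiring 𝕜] [PartialOrder 𝕜]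
    [AddCommMonoid E] [Module 𝕜 E] [AddCommMonoid X] [Module 𝕜 X]
    [AddCommMonoid β] [PartialOrder β] [Module 𝕜 β] [AddCommMonoid γ] [PartialOrder γ]
    [Module 𝕜 γ] {F : E × (ι → β) → γ} (hF : ConvexOn 𝕜 univ F)
    (hanti : ∀ x, Antitone fun q => F (x, q))
    {s : Set (E × X)} (hs : Convex 𝕜 s) {φ : ι → E × X → β} (hφ : ∀ i, ConcaveOn 𝕜 s (φ i)) :
    ConvexOn 𝕜 s fun z => F (z.1, fun i => φ i z) := by
  refine ⟨hs, fun z₁ hz₁ z₂ hz₂ a b ha hb hab => ?_⟩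
  calc F ((a • z₁ + b • z₂).1, fun i => φ i (a • z₁ + b • z₂))
      ≤ F (a • z₁.1 + b • z₂.1, fun i => a • φ i z₁ + b • φ i z₂) :=
        hanti _ fun i => (hφ i).2 hz₁ hz₂ ha hb hab
    _ = F (a • (z₁.1, fun i => φ i z₁) + b • (z₂.1, fun i => φ i z₂)) := rfl
    _ ≤ a • F (z₁.1, fun i => φ i z₁) + b • F (z₂.1, fun i => φ i z₂) :=
        hF.2 trivial trivial ha hb hab

theorem G_convex_and_nonincreasing_general (d N : ℕ)
    (H : Fin N → EuclideanSpace ℝ (Fin d) × ℝ → ℝ)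
    (hC2 : ∀ i, ContDiff ℝ 2 (H i))
    (hposdef : ∀ i (P v : EuclideanSpace ℝ (Fin d) × ℝ), v ≠ 0 →
      0 < iteratedFDeriv ℝ 2 (H i) P ![v, v])
    (π0 : Fin N → EuclideanSpace ℝ (Fin d) → ℝ)
    (hπ0 : ∀ i p', (∀ q : ℝ, H i (p', π0 i p') ≤ H i (p', q)) ∧
      ∀ p : ℝ, (∀ q : ℝ, H i (p', p) ≤ H i (p', q)) → p = π0 i p')
    (A0 : EuclideanSpace ℝ (Fin d) → ℝ)
    (hA0 : ∀ p', IsGreatest (Set.range fun i => H i (p', π0 i p')) (A0 p'))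
    (πp : Fin N → EuclideanSpace ℝ (Fin d) → ℝ → ℝ)
    (hπp : ∀ i (p' : EuclideanSpace ℝ (Fin d)) (lam : ℝ), H i (p', π0 i p') ≤ lam →
      π0 i p' ≤ πp i p' lam ∧ H i (p', πp i p' lam) = lam ∧
      ∀ p : ℝ, π0 i p' ≤ p → H i (p', p) = lam → p = πp i p' lam)
    (F : EuclideanSpace ℝ (Fin d) × (Fin N → ℝ) → ℝ)
    (hFconv : ConvexOn ℝ Set.univ F)
    (hFmono : ∀ (p' : EuclideanSpace ℝ (Fin d)) (q : Fin N → ℝ) (i : Fin N) (a b : ℝ),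
      a ≤ b → F (p', Function.update q i b) ≤ F (p', Function.update q i a)) :
    ConvexOn ℝ {q : EuclideanSpace ℝ (Fin d) × ℝ | A0 q.1 ≤ q.2}
      (fun q => F (q.1, fun i => πp i q.1 q.2)) ∧
    ∀ (p' : EuclideanSpace ℝ (Fin d)) (lam mu : ℝ), A0 p' ≤ lam → lam ≤ mu →
      F (p', fun i => πp i p' mu) ≤ F (p', fun i => πp i p' lam) := by
  have hHconv : ∀ i, ConvexOn ℝ univ (H i) := fun i =>
    (strictConvexOn_univ_of_iteratedFDeriv_two_pos (hC2 i) (hposdef i)).convexOn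
  have hFanti : ∀ p', Antitone fun q => F (p', q) := fun p' =>
    antitone_of_antitone_update fun q i _ _ => hFmono p' q i _ _
  have hAi_le : ∀ i p', H i (p', π0 i p') ≤ A0 p' := fun i p' => (hA0 p').2 ⟨i, rfl⟩
  have hmin : ∀ i p' q, H i (p', π0 i p') ≤ H i (p', q) := fun i p' => (hπ0 i p').1
  have huniq : ∀ i p' p, (∀ q, H i (p', p) ≤ H i (p', q)) → p = π0 i p' :=
    fun i p' => (hπ0 i p').2
  have hroot : ∀ i p' lam, H i (p', π0 i p') ≤ lam →
      π0 i p' ≤ πp i p' lam ∧ H i (p', πp i p' lam) = lam :=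
    fun i p' lam hlam => ⟨(hπp i p' lam hlam).1, (hπp i p' lam hlam).2.1⟩
  have hepi : Convex ℝ {q : EuclideanSpace ℝ (Fin d) × ℝ | A0 q.1 ≤ q.2} := by
    simpa using (ConvexOn.of_isGreatest_range
      (fun i => (hHconv i).comp_prodMk_argmin (hmin i)) hA0).convex_epigraph
  refine ⟨hFconv.comp_prodMk_concaveOn hFanti hepi fun i => ?_,
    fun p' lam mu hlam hmu => hFanti p' fun i => ?_⟩
  · exact ((hHconv i).concaveOn_upperRoot (hmin i) (huniq i) (hroot i)).subset
      (fun q hq => (hAi_le i q.1).trans hq) hepi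
  · have hlam_i := (hAi_le i p').trans hlam
    exact (hHconv i).monotoneOn_upperRoot (hmin i) (huniq i) (hroot i) p' hlam_i
      (hlam_i.trans hmu) hmu

/-- With `H i : ℝ^d × ℝ → ℝ` C², positive definite Hessian, superlinear,
`π0 i p'` the unique minimizer of `p ↦ H i (p', p)`, `A0 = max_i H i (p', π0 i p')`,
`πp i p' λ` the unique `p ≥ π0 i p'` with `H i (p', p) = λ` (for `λ ≥ A_i p'`), and
`F` convex and nonincreasing in each of its last `N` variables, the function
`G (p', λ) := F (p', (πp i p' λ)_i)` is convex on the epigraph of `A0` and,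
for fixed `p'`, nonincreasing in `λ` on `[A0 p', +∞)`. -/
theorem G_convex_and_nonincreasing (d N : ℕ) (hN : 1 ≤ N)
    (H : Fin N → EuclideanSpace ℝ (Fin d) × ℝ → ℝ)
    (hC2 : ∀ i, ContDiff ℝ 2 (H i))
    (hposdef : ∀ i (P v : EuclideanSpace ℝ (Fin d) × ℝ), v ≠ 0 →
      0 < iteratedFDeriv ℝ 2 (H i) P ![v, v])
    (hsuper : ∀ i, ∀ M : ℝ, ∃ R : ℝ, ∀ P : EuclideanSpace ℝ (Fin d) × ℝ,
      R ≤ ‖P‖ → M * ‖P‖ ≤ H i P)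
    (π0 : Fin N → EuclideanSpace ℝ (Fin d) → ℝ)
    (hπ0 : ∀ i p', (∀ q : ℝ, H i (p', π0 i p') ≤ H i (p', q)) ∧
      ∀ p : ℝ, (∀ q : ℝ, H i (p', p) ≤ H i (p', q)) → p = π0 i p')
    (A0 : EuclideanSpace ℝ (Fin d) → ℝ)
    (hA0 : ∀ p', IsGreatest (Set.range fun i => H i (p', π0 i p')) (A0 p'))
    (πp : Fin N → EuclideanSpace ℝ (Fin d) → ℝ → ℝ)
    (hπp : ∀ i (p' : EuclideanSpace ℝ (Fin d)) (lam : ℝ), H i (p', π0 i p') ≤ lam →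
      π0 i p' ≤ πp i p' lam ∧ H i (p', πp i p' lam) = lam ∧
      ∀ p : ℝ, π0 i p' ≤ p → H i (p', p) = lam → p = πp i p' lam)
    (F : EuclideanSpace ℝ (Fin d) × (Fin N → ℝ) → ℝ)
    (hFconv : ConvexOn ℝ Set.univ F)
    (hFmono : ∀ (p' : EuclideanSpace ℝ (Fin d)) (q : Fin N → ℝ) (i : Fin N) (a b : ℝ),
      a ≤ b → F (p', Function.update q i b) ≤ F (p', Function.update q i a)) :
    ConvexOn ℝ {q : EuclideanSpace ℝ (Fin d) × ℝ | A0 q.1 ≤ q.2}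
      (fun q => F (q.1, fun i => πp i q.1 q.2)) ∧
    ∀ (p' : EuclideanSpace ℝ (Fin d)) (lam mu : ℝ), A0 p' ≤ lam → lam ≤ mu →
      F (p', fun i => πp i p' mu) ≤ F (p', fun i => πp i p' lam) :=
  G_convex_and_nonincreasing_general d N H hC2 hposdef π0 hπ0 A0 hA0 πp hπp F hFconv hFmono
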